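/- Let π and π₀ be representations of a quasi-local algebra A = A_Γ such that for every cone Λ in ℤ², π restricted to A_{Λᶜ} is quasi-equivalent to π₀ restricted to A_{Λᶜ}. Let α be an automorphism of A such that for every cone Λ there is an inclusion of cones Γ₁ ⊆ Λ ⊆ Γ₂ and a factorization α = Ad(u) ∘ Ξ̃ ∘ (α_Λ ⊗ α_{Λᶜ}), where u ∈ A is unitary, α_Λ ∈ Aut(A_Λ), α_{Λᶜ} ∈ Aut(A_{Λᶜ}), and Ξ̃ acts as an automorphism of A_{Γ₂∖Γ₁} tensored with the identity elsewhere. Then for every cone Λ, π∘α restricted to A_{Λᶜ} is quasi-equivalent to π₀∘α restricted to A_{Λᶜ}. -/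
import Mathlib


/-- Euclidean dot product on `ℝ²`. -/
def dotR (x y : ℝ × ℝ) : ℝ := x.1 * y.1 + x.2 * y.2

/-- Euclidean norm on `ℝ²`. -/
noncomputable def nrmR (x : ℝ × ℝ) : ℝ := Real.sqrt (dotR x x)

/-- The embedding of the lattice `ℤ²` into `ℝ²`. -/
def toR (x : ℤ × ℤ) : ℝ × ℝ := ((x.1 : ℝ), (x.2 : ℝ))

/-- A cone in `ℤ²`: the lattice points `x` with `(x−a)·e ≥ |x−a| cos θ` for some apex
`a ∈ ℝ²`, unit axis direction `e` and opening half-angle `θ ∈ (0, π/2)`. -/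
def IsCone (Λ : Set (ℤ × ℤ)) : Prop :=
  ∃ (a e : ℝ × ℝ) (θ : ℝ), 0 < θ ∧ θ < Real.pi / 2 ∧ nrmR e = 1 ∧
    Λ = {x : ℤ × ℤ | nrmR (toR x - a) * Real.cos θ ≤ dotR (toR x - a) e}

/-- The double commutant of a set of bounded operators. -/
def DComm {H : Type*} [NormedAddCommGroup H] [InnerProductSpace ℂ H] [CompleteSpace H]
    (s : Set (H →L[ℂ] H)) : Set (H →L[ℂ] H) :=
  Set.centralizer (Set.centralizer s)

/-- Quasi-equivalence of two representations: a normal *-isomorphism between the generated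
von Neumann algebras intertwining them (normality expressed by preservation of double
commutants of subsets). -/
def QuasiEquiv {A : Type*} [Ring A] [Algebra ℂ A] [StarRing A]
    {H₁ H₂ : Type*} [NormedAddCommGroup H₁] [InnerProductSpace ℂ H₁] [CompleteSpace H₁]
    [NormedAddCommGroup H₂] [InnerProductSpace ℂ H₂] [CompleteSpace H₂]
    (π₁ : A →⋆ₐ[ℂ] (H₁ →L[ℂ] H₁)) (π₂ : A →⋆ₐ[ℂ] (H₂ →L[ℂ] H₂)) : Prop :=
  ∃ Φ : (H₁ →L[ℂ] H₁) → (H₂ →L[ℂ] H₂),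
    Set.BijOn Φ (DComm (Set.range π₁)) (DComm (Set.range π₂)) ∧
    (∀ x ∈ DComm (Set.range π₁), ∀ y ∈ DComm (Set.range π₁),
      Φ (x + y) = Φ x + Φ y ∧ Φ (x * y) = Φ x * Φ y) ∧
    (∀ x ∈ DComm (Set.range π₁), Φ (star x) = star (Φ x) ∧ ∀ c : ℂ, Φ (c • x) = c • Φ x) ∧
    (∀ s : Set (H₁ →L[ℂ] H₁), s ⊆ DComm (Set.range π₁) → Φ '' DComm s = DComm (Φ '' s)) ∧
    (∀ a : A, Φ (π₁ a) = π₂ a)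

section Helpers

variable {R : Type*} [Ring R]

private lemma conj_cancel {v w : R} (hwv : w * v = 1) (x : R) :
    w * (v * x * w) * v = x := by
  simp only [← mul_assoc]
  rw [hwv, one_mul, mul_assoc, hwv, mul_one]

private lemma conj_comm {v w x m : R} (hwv : w * v = 1)
    (h : v * m * w * x = x * (v * m * w)) : m * (w * x * v) = w * x * v * m := by
  have h2 : w * (v * m * w * x) * v = w * (x * (v * m * w)) * v := by rw [h]
  simp only [← mul_assoc] at h2 ⊢
  rw [hwv, one_mul] at h2
  rw [mul_assoc (w * x * v * m) w v, hwv, mul_one] at h2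
  exact h2

private lemma ad_centralizer {v w : R} (hvw : v * w = 1) (hwv : w * v = 1) (s : Set R) :
    Set.centralizer ((fun x => v * x * w) '' s) = (fun x => v * x * w) '' Set.centralizer s := by
  ext x
  constructor
  · intro hx
    refine ⟨w * x * v, ?_, ?_⟩
    · intro m hm
      have h := hx (v * m * w) ⟨m, hm, rfl⟩
      exact conj_comm hwv h
    · simp only [← mul_assoc]
      rw [hvw, one_mul, mul_assoc, hvw, mul_one]
  · rintro ⟨c, hc, rfl⟩
    rintro y ⟨m, hm, rfl⟩
    have hcm := hc m hm
    have e1 : v * m * w * (v * c * w) = v * m * c * w := by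
      simp only [← mul_assoc]
      rw [mul_assoc (v * m) w v, hwv, mul_one]
    have e2 : v * c * w * (v * m * w) = v * c * m * w := by
      simp only [← mul_assoc]
      rw [mul_assoc (v * c) w v, hwv, mul_one]
    rw [e1, e2, mul_assoc v m c, hcm, ← mul_assoc]

end Helpers

private lemma ad_dcomm {H : Type*} [NormedAddCommGroup H] [InnerProductSpace ℂ H]
    [CompleteSpace H] {v w : H →L[ℂ] H} (hvw : v * w = 1) (hwv : w * v = 1)
    (s : Set (H →L[ℂ] H)) :
    DComm ((fun x => v * x * w) '' s) = (fun x => v * x * w) '' DComm s := by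
  unfold DComm
  rw [ad_centralizer hvw hwv s, ad_centralizer hvw hwv (Set.centralizer s)]

private lemma dcomm_mono {H : Type*} [NormedAddCommGroup H] [InnerProductSpace ℂ H]
    [CompleteSpace H] {s t : Set (H →L[ℂ] H)} (h : s ⊆ t) : DComm s ⊆ DComm t :=
  Set.centralizer_subset (Set.centralizer_subset h)

private lemma subset_dcomm {H : Type*} [NormedAddCommGroup H] [InnerProductSpace ℂ H]
    [CompleteSpace H] (s : Set (H →L[ℂ] H)) : s ⊆ DComm s :=
  Set.subset_centralizer_centralizer

private lemma conjMulAd {R : Type*} [Ring R] {v w : R} (hvw : v * w = 1) (x y : R) :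
    w * (x * y) * v = (w * x * v) * (w * y * v) := by
  simp only [← mul_assoc]
  rw [mul_assoc (w * x) v w, hvw, mul_one]

private lemma quasiEquiv_conj_comp
    {A B : Type*} [Ring A] [Algebra ℂ A] [StarRing A] [Ring B] [Algebra ℂ B] [StarRing B]
    {H₁ H₂ : Type*} [NormedAddCommGroup H₁] [InnerProductSpace ℂ H₁] [CompleteSpace H₁]
    [NormedAddCommGroup H₂] [InnerProductSpace ℂ H₂] [CompleteSpace H₂]
    (π₁ : A →⋆ₐ[ℂ] (H₁ →L[ℂ] H₁)) (π₂ : A →⋆ₐ[ℂ] (H₂ →L[ℂ] H₂))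
    (h : QuasiEquiv π₁ π₂) (β : B → A)
    (v₁ : H₁ →L[ℂ] H₁) (hv₁ : v₁ * star v₁ = 1) (hv₁' : star v₁ * v₁ = 1)
    (v₂ : H₂ →L[ℂ] H₂) (hv₂ : v₂ * star v₂ = 1) (hv₂' : star v₂ * v₂ = 1)
    (ρ₁ : B →⋆ₐ[ℂ] (H₁ →L[ℂ] H₁)) (ρ₂ : B →⋆ₐ[ℂ] (H₂ →L[ℂ] H₂))
    (hρ₁ : ∀ b, ρ₁ b = v₁ * π₁ (β b) * star v₁)
    (hρ₂ : ∀ b, ρ₂ b = v₂ * π₂ (β b) * star v₂) :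
    QuasiEquiv ρ₁ ρ₂ := by
  obtain ⟨Φ, hbij, hmul, hstarp, hnorm, hint⟩ := h
  have hT : Set.range (fun b : B => π₁ (β b)) ⊆ Set.range π₁ := by
    rintro _ ⟨b, rfl⟩; exact ⟨β b, rfl⟩
  have hrange1 : Set.range ρ₁
      = (fun x => v₁ * x * star v₁) '' Set.range (fun b : B => π₁ (β b)) := by
    ext x
    constructor
    · rintro ⟨b, rfl⟩; exact ⟨π₁ (β b), ⟨b, rfl⟩, (hρ₁ b).symm⟩
    · rintro ⟨_, ⟨b, rfl⟩, rfl⟩; exact ⟨b, hρ₁ b⟩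
  have hD1 : DComm (Set.range ρ₁)
      = (fun x => v₁ * x * star v₁) '' DComm (Set.range (fun b : B => π₁ (β b))) := by
    rw [hrange1, ad_dcomm hv₁ hv₁']
  have hmemT : ∀ x ∈ DComm (Set.range ρ₁),
      star v₁ * x * v₁ ∈ DComm (Set.range (fun b : B => π₁ (β b))) := by
    intro x hx
    rw [hD1] at hx
    obtain ⟨t, ht, rfl⟩ := hx
    have e : star v₁ * (v₁ * t * star v₁) * v₁ = t := conj_cancel hv₁' t
    simpa [e] using ht
  have hmem' : ∀ x ∈ DComm (Set.range ρ₁), star v₁ * x * v₁ ∈ DComm (Set.range π₁) :=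
    fun x hx => dcomm_mono hT (hmemT x hx)
  -- normality of the transported map
  have hmain : ∀ s : Set (H₁ →L[ℂ] H₁), s ⊆ DComm (Set.range ρ₁) →
      (fun x => v₂ * Φ (star v₁ * x * v₁) * star v₂) '' DComm s
        = DComm ((fun x => v₂ * Φ (star v₁ * x * v₁) * star v₂) '' s) := by
    intro s hs
    have h1 : (fun x => star v₁ * x * v₁) '' s ⊆ DComm (Set.range π₁) := by
      rintro _ ⟨x, hx, rfl⟩; exact hmem' x (hs hx)
    have e1 : (fun x => v₂ * Φ (star v₁ * x * v₁) * star v₂) '' DComm s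
        = (fun y => v₂ * y * star v₂) '' (Φ '' ((fun x => star v₁ * x * v₁) '' DComm s)) := by
      simp only [Set.image_image]
    have e2 : (fun x => v₂ * Φ (star v₁ * x * v₁) * star v₂) '' s
        = (fun y => v₂ * y * star v₂) '' (Φ '' ((fun x => star v₁ * x * v₁) '' s)) := by
      simp only [Set.image_image]
    rw [e1, e2, ← ad_dcomm hv₁' hv₁ s, hnorm _ h1, ad_dcomm hv₂ hv₂']
  -- intertwining
  have hinter : ∀ b : B, v₂ * Φ (star v₁ * ρ₁ b * v₁) * star v₂ = ρ₂ b := by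
    intro b
    rw [hρ₁ b, conj_cancel hv₁' (π₁ (β b)), hint (β b), ← hρ₂ b]
  have hir : (fun x => v₂ * Φ (star v₁ * x * v₁) * star v₂) '' Set.range ρ₁
      = Set.range ρ₂ := by
    ext x
    simp only [Set.mem_image, Set.mem_range]
    constructor
    · rintro ⟨_, ⟨b, rfl⟩, rfl⟩; exact ⟨b, (hinter b).symm⟩
    · rintro ⟨b, rfl⟩; exact ⟨ρ₁ b, ⟨b, rfl⟩, hinter b⟩
  have hDrange : (fun x => v₂ * Φ (star v₁ * x * v₁) * star v₂) '' DComm (Set.range ρ₁)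
      = DComm (Set.range ρ₂) := by
    rw [hmain _ (subset_dcomm _), hir]
  refine ⟨fun x => v₂ * Φ (star v₁ * x * v₁) * star v₂, ?_, ?_, ?_, hmain, fun b => hinter b⟩
  · -- BijOn
    refine ⟨fun x hx => hDrange ▸ Set.mem_image_of_mem _ hx, ?_, hDrange.ge⟩
    intro x hx y hy hxy
    have h1 := hmem' x hx
    have h2 := hmem' y hy
    have h3 : Φ (star v₁ * x * v₁) = Φ (star v₁ * y * v₁) := by
      have := congrArg (fun z => star v₂ * z * v₂) hxy
      simpa [conj_cancel hv₂'] using this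
    have h4 : star v₁ * x * v₁ = star v₁ * y * v₁ := hbij.2.1 h1 h2 h3
    have := congrArg (fun z => v₁ * z * star v₁) h4
    simpa [conj_cancel hv₁] using this
  · -- additive and multiplicative
    intro x hx y hy
    have h1 := hmem' x hx
    have h2 := hmem' y hy
    dsimp only
    constructor
    · have e : star v₁ * (x + y) * v₁ = star v₁ * x * v₁ + star v₁ * y * v₁ := by
        rw [mul_add, add_mul]
      rw [e, (hmul _ h1 _ h2).1, mul_add, add_mul]
    · rw [conjMulAd hv₁ x y, (hmul _ h1 _ h2).2, conjMulAd hv₂' _ _]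
  · -- star and scalar
    intro x hx
    have h1 := hmem' x hx
    dsimp only
    constructor
    · have e : star v₁ * star x * v₁ = star (star v₁ * x * v₁) := by
        simp [star_mul, star_star, mul_assoc]
      rw [e, (hstarp _ h1).1]
      simp [star_mul, star_star, mul_assoc]
    · intro c
      have e : star v₁ * (c • x) * v₁ = c • (star v₁ * x * v₁) := by
        rw [mul_smul_comm, smul_mul_assoc]
      rw [e, (hstarp _ h1).2 c, mul_smul_comm, smul_mul_assoc]

/-- Theorem 4.5 of the paper; stability of the superselection criterion.
Let `𝒜` assign to each region of `ℤ²` its local algebra inside the quasi-local algebra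
`AΓ`.  Let `π, π₀` be representations such that `π|_{𝒜(Λᶜ)}` is quasi-equivalent to
`π₀|_{𝒜(Λᶜ)}` for every cone `Λ`.  Let `α` be an automorphism of `AΓ` such that for
every cone `Λ` there are cones `Γ₁ ⊆ Λ ⊆ Γ₂` and a factorization
`α = Ad(u) ∘ Ξ̃ ∘ (α_Λ ⊗ α_{Λᶜ})` with `u` unitary, `α_Λ ⊗ α_{Λᶜ}` preserving `𝒜(Λ)` and
`𝒜(Λᶜ)`, and `Ξ̃` an automorphism of `𝒜(Γ₂ ∖ Γ₁)` tensored with the identity (fixing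
`𝒜((Γ₂∖Γ₁)ᶜ)` pointwise and preserving `𝒜(X)` for every `X ⊇ Γ₂∖Γ₁`).  Then for every
cone `Λ`, `π∘α|_{𝒜(Λᶜ)}` is quasi-equivalent to `π₀∘α|_{𝒜(Λᶜ)}`. -/
theorem superselection_criterion_stability
    {AΓ : Type*} [NormedRing AΓ] [StarRing AΓ] [CStarRing AΓ] [CompleteSpace AΓ]
    [NormedAlgebra ℂ AΓ] [StarModule ℂ AΓ]
    (𝒜 : Set (ℤ × ℤ) → StarSubalgebra ℂ AΓ)
    (hmono : ∀ X Y : Set (ℤ × ℤ), X ⊆ Y → 𝒜 X ≤ 𝒜 Y)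
    {H₀ H : Type*} [NormedAddCommGroup H₀] [InnerProductSpace ℂ H₀] [CompleteSpace H₀]
    [NormedAddCommGroup H] [InnerProductSpace ℂ H] [CompleteSpace H]
    (π₀ : AΓ →⋆ₐ[ℂ] (H₀ →L[ℂ] H₀)) (π : AΓ →⋆ₐ[ℂ] (H →L[ℂ] H))
    (α : AΓ ≃⋆ₐ[ℂ] AΓ)
    (hsel : ∀ Λ : Set (ℤ × ℤ), IsCone Λ →
      QuasiEquiv (π.comp (𝒜 Λᶜ).subtype) (π₀.comp (𝒜 Λᶜ).subtype))
    (hfac : ∀ Λ : Set (ℤ × ℤ), IsCone Λ →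
      ∃ Γ₁ Γ₂ : Set (ℤ × ℤ), IsCone Γ₁ ∧ IsCone Γ₂ ∧ Γ₁ ⊆ Λ ∧ Λ ⊆ Γ₂ ∧
        ∃ u : AΓ, u * star u = 1 ∧ star u * u = 1 ∧
          ∃ ξ ψ : AΓ ≃⋆ₐ[ℂ] AΓ,
            (∀ a : AΓ, α a = u * ξ (ψ a) * star u) ∧
            Set.MapsTo ψ ((𝒜 Λ : Set AΓ)) (𝒜 Λ) ∧
            Set.MapsTo ψ ((𝒜 Λᶜ : Set AΓ)) (𝒜 Λᶜ) ∧
            Set.MapsTo ψ.symm ((𝒜 Λ : Set AΓ)) (𝒜 Λ) ∧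
            Set.MapsTo ψ.symm ((𝒜 Λᶜ : Set AΓ)) (𝒜 Λᶜ) ∧
            (∀ a ∈ 𝒜 ((Γ₂ \ Γ₁)ᶜ), ξ a = a) ∧
            (∀ X : Set (ℤ × ℤ), Γ₂ \ Γ₁ ⊆ X →
              Set.MapsTo ξ ((𝒜 X : Set AΓ)) (𝒜 X) ∧
              Set.MapsTo ξ.symm ((𝒜 X : Set AΓ)) (𝒜 X))) :
    ∀ Λ : Set (ℤ × ℤ), IsCone Λ →
      QuasiEquiv ((π.comp (α : AΓ →⋆ₐ[ℂ] AΓ)).comp (𝒜 Λᶜ).subtype)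
        ((π₀.comp (α : AΓ →⋆ₐ[ℂ] AΓ)).comp (𝒜 Λᶜ).subtype) := by
  intro Λ hΛ
  obtain ⟨Γ₁, Γ₂, hc1, _, h1Λ, _, u, huw, hwu, ξ, ψ, hα, _, hψc, _, _, _, hξmap⟩ := hfac Λ hΛ
  have hΛsub : (Λᶜ : Set (ℤ × ℤ)) ⊆ (Γ₁ᶜ : Set (ℤ × ℤ)) := Set.compl_subset_compl.mpr h1Λ
  have hξc : Set.MapsTo ξ ((𝒜 Γ₁ᶜ : Set AΓ)) ((𝒜 Γ₁ᶜ : Set AΓ)) :=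
    (hξmap Γ₁ᶜ (fun x hx => hx.2)).1
  have hβmem : ∀ a : (𝒜 Λᶜ), ξ (ψ (a : AΓ)) ∈ 𝒜 Γ₁ᶜ := fun a =>
    hξc (hmono _ _ hΛsub (hψc a.2))
  refine quasiEquiv_conj_comp (π.comp (𝒜 Γ₁ᶜ).subtype) (π₀.comp (𝒜 Γ₁ᶜ).subtype)
    (hsel Γ₁ hc1) (fun a : (𝒜 Λᶜ) => (⟨ξ (ψ (a : AΓ)), hβmem a⟩ : (𝒜 Γ₁ᶜ)))
    (π u) ?_ ?_ (π₀ u) ?_ ?_ _ _ ?_ ?_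
  · rw [← map_star, ← map_mul, huw, map_one]
  · rw [← map_star, ← map_mul, hwu, map_one]
  · rw [← map_star, ← map_mul, huw, map_one]
  · rw [← map_star, ← map_mul, hwu, map_one]
  · intro b
    show π (α (b : AΓ)) = _
    rw [hα (b : AΓ), map_mul, map_mul, map_star]
    rfl
  · intro b
    show π₀ (α (b : AΓ)) = _
    rw [hα (b : AΓ), map_mul, map_mul, map_star]
    rfl
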